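/- arXiv:2404.02846 — 2 statements merged into one kernel-verified Lean document; each statement's English description precedes it below -/
import Mathlib

section
/- Let (G, B, N, W) be a Tits system (BN-pair). Then the quadruple (⟨B^d, N ≀ Σ_d⟩, B^d, N ≀ Σ_d, W ≀ Σ_d) is a generalized Tits system in the sense of Iwahori: W ≀ Σ_d ≅ W^d ⋊ Σ_d where W^d is generated by involutions, every element τ of the image of Σ_d normalizes B^d and permutes the set of simple reflections of W^d, B^d τ ≠ B^d for τ ≠ 1, and for every simple reflection s of W^d and w ∈ W ≀ Σ_d one has s B^d w ⊆ B^d s w B^d ∪ B^d w B^d with s B^d ≠ B^d s. -/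
open Pointwise

/-- Place-permutation action of `Σ_d` on `G^d`. -/
def permAction (G : Type*) [Group G] (d : ℕ) :
    Equiv.Perm (Fin d) →* MulAut (Fin d → G) where
  toFun w := MulEquiv.arrowCongr w (MulEquiv.refl G)
  map_one' := by ext g i; rfl
  map_mul' := fun u v => by ext g i; rfl

/-- The wreath product `G ≀ Σ_d = G^d ⋊ Σ_d`, with `Σ_d` acting by place permutations. -/
abbrev WreathProduct (G : Type*) [Group G] (d : ℕ) :=
  SemidirectProduct (Fin d → G) (Equiv.Perm (Fin d)) (permAction G d)

/-- `s^{(j)} = (1,...,1,s,1,...,1)` with `s` in slot `j`. -/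
def unitTuple {G : Type*} [Group G] {d : ℕ} (j : Fin d) (g : G) : Fin d → G :=
  fun i => if i = j then g else 1

section
variable {G : Type*} [Group G] (B N : Subgroup G) (d : ℕ)

/-- The subgroup `B^d` of `G ≀ Σ_d` (tuples in `B^d` with trivial permutation part). -/
def wreathB : Subgroup (WreathProduct G d) :=
  Subgroup.map SemidirectProduct.inl (Subgroup.pi Set.univ fun _ => B)

/-- The subgroup `N ≀ Σ_d` of `G ≀ Σ_d`. -/
def wreathN : Subgroup (WreathProduct G d) :=
  Subgroup.closure
    ((SemidirectProduct.inl '' {f : Fin d → G | ∀ i, f i ∈ N}) ∪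
      Set.range (SemidirectProduct.inr (φ := permAction G d)))

/-- The simple reflections of `W^d`: elements `s^{(j)}` for `s` a simple reflection of `W`. -/
def wreathS (S : Set G) : Set (WreathProduct G d) :=
  {x | ∃ (j : Fin d) (s : G), s ∈ S ∧ x = SemidirectProduct.inl (unitTuple j s)}

end

/-! Everything is checked one coordinate at a time. `B^d` and `N^d` are products, so normality
of `B ∩ N`, the involutions and the generation statements hold coordinatewise, while `Σ_d` only
permutes coordinates and hence normalizes `B^d` and permutes the `s^{(j)}`. For the Tits axiom
write `w = v τ` with `v ∈ N^d` and `τ ∈ Σ_d`: right multiplication by `τ` preserves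
`B^d`-double cosets, a `B^d`-double coset in `G^d` is the product of the `B`-double cosets of the
coordinates, and `s^{(j)} b v` differs from `b v` only in coordinate `j`, where the Tits axiom of
`G` applies. -/

open SemidirectProduct Set

lemma Set.mem_singleton_mul_mul_singleton {α : Type*} [Mul α] {a c g : α} {s : Set α} :
    g ∈ {a} * s * {c} ↔ ∃ p ∈ s, g = a * p * c := by
  simp [Set.singleton_mul, Set.mul_singleton, eq_comm]

lemma Set.mem_doubleCoset_univ_pi {ι α : Type*} [Mul α] {s t : Set α} {a f : ι → α}
    (h : ∀ i, f i ∈ s * {a i} * t) :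
    f ∈ univ.pi (fun _ => s) * {a} * univ.pi (fun _ => t) := by
  choose β hβ γ hγ hf using fun i => DoubleCoset.mem_doubleCoset.1 (h i)
  exact DoubleCoset.mem_doubleCoset.2
    ⟨β, fun i _ => hβ i, γ, fun i _ => hγ i, funext hf⟩

lemma Subgroup.coe_mul_singleton_ne_self {α : Type*} [Group α] {K : Subgroup α} {g : α}
    (hg : g ∉ K) : (K : Set α) * {g} ≠ K := by
  intro h
  have : 1 * g ∈ (K : Set α) * {g} := Set.mul_mem_mul K.one_mem rfl
  rw [h, one_mul] at this
  exact hg this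

lemma Pi.mulSingle_mul_mem_univ_pi_doubleCoset {ι G : Type*} [DecidableEq ι] [Group G]
    {H : Subgroup G} {j : ι} {s t : G} {b v : ι → G} (hb : ∀ i, b i ∈ H)
    (hj : s * b j * v j ∈ (H : Set G) * {t * v j} * H) :
    Pi.mulSingle j s * b * v ∈
      (univ.pi fun _ => (H : Set G)) * {Pi.mulSingle j t * v} * univ.pi fun _ => (H : Set G) := by
  refine mem_doubleCoset_univ_pi fun i => ?_
  rcases eq_or_ne i j with rfl | hij
  · simpa only [Pi.mul_apply, Pi.mulSingle_eq_same] using hj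
  · simp only [Pi.mul_apply, Pi.mulSingle_eq_of_ne hij, one_mul]
    exact DoubleCoset.mem_doubleCoset.2 ⟨b i, hb i, 1, H.one_mem, (mul_one _).symm⟩

namespace WreathProduct

variable {G : Type*} [Group G] {d : ℕ} {H : Subgroup G}

lemma permAction_apply (σ : Equiv.Perm (Fin d)) (f : Fin d → G) (i : Fin d) :
    permAction G d σ f i = f (σ⁻¹ i) := rfl

lemma permAction_mulSingle (σ : Equiv.Perm (Fin d)) (j : Fin d) (g : G) :
    permAction G d σ (Pi.mulSingle j g) = Pi.mulSingle (σ j) g :=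
  Pi.mulSingle_comp_equiv σ.symm j g

lemma unitTuple_eq_mulSingle (j : Fin d) (g : G) : unitTuple j g = Pi.mulSingle j g := by
  funext i
  simp [unitTuple, Pi.mulSingle_apply]

lemma mem_wreathS {S : Set G} {x : WreathProduct G d} :
    x ∈ wreathS d S ↔ ∃ j, ∃ s ∈ S, x = inl (Pi.mulSingle j s) := by
  simp [wreathS, unitTuple_eq_mulSingle]

lemma coe_wreathB :
    (wreathB H d : Set (WreathProduct G d)) = inl '' univ.pi fun _ => H := by
  simp [wreathB, Subgroup.coe_pi]

lemma mem_wreathB {x : WreathProduct G d} :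
    x ∈ wreathB H d ↔ x.right = 1 ∧ ∀ i, x.left i ∈ H := by
  constructor
  · rintro ⟨f, hf, rfl⟩
    exact ⟨rfl, fun i => hf i (mem_univ i)⟩
  · rintro ⟨hr, hl⟩
    refine ⟨x.left, fun i _ => hl i, ?_⟩
    rw [← inl_left_mul_inr_right x, hr, map_one, mul_one]
    rfl

lemma inl_mulSingle_mem_wreathB {g : G} (j : Fin d) (hg : g ∈ H) :
    (inl (Pi.mulSingle j g) : WreathProduct G d) ∈ wreathB H d :=
  Subgroup.mem_map_of_mem _
    ((Subgroup.mulSingle_mem_pi (I := univ) (H := fun _ => H) j g).2 fun _ => hg)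

lemma mem_wreathN {N : Subgroup G} {x : WreathProduct G d} :
    x ∈ wreathN N d ↔ ∀ i, x.left i ∈ N := by
  constructor
  · intro hx
    induction hx using Subgroup.closure_induction with
    | mem y hy =>
      rcases hy with ⟨f, hf, rfl⟩ | ⟨σ, rfl⟩
      exacts [hf, fun _ => N.one_mem]
    | one => exact fun _ => N.one_mem
    | mul a b _ _ ha hb => exact fun i => N.mul_mem (ha i) (hb _)
    | inv a _ ha => exact fun i => N.inv_mem (ha _)
  · intro hx
    rw [← inl_left_mul_inr_right x]
    exact mul_mem (Subgroup.subset_closure (Or.inl ⟨x.left, hx, rfl⟩))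
      (Subgroup.subset_closure (Or.inr ⟨x.right, rfl⟩))

lemma wreathB_inf_wreathN (B N : Subgroup G) :
    wreathB B d ⊓ wreathN N d = wreathB (B ⊓ N) d := by
  ext x
  simp only [Subgroup.mem_inf, mem_wreathB, mem_wreathN, forall_and, and_assoc]

lemma conj_mem_wreathB {n h : WreathProduct G d}
    (hn : ∀ i, ∀ b ∈ H, n.left i * b * (n.left i)⁻¹ ∈ H) (hh : h ∈ wreathB H d) :
    n * h * n⁻¹ ∈ wreathB H d := by
  rw [mem_wreathB] at hh ⊢
  obtain ⟨hr, hl⟩ := hh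
  refine ⟨by simp [hr], fun i => ?_⟩
  simpa [hr, permAction_apply, Equiv.Perm.inv_def] using hn i _ (hl (n.right⁻¹ i))

lemma inr_conj_mem_wreathB (σ : Equiv.Perm (Fin d)) {h : WreathProduct G d}
    (hh : h ∈ wreathB H d) : inr σ * h * (inr σ)⁻¹ ∈ wreathB H d :=
  conj_mem_wreathB (fun i b hb => by simpa using hb) hh

lemma inl_mem_of_forall_mulSingle_mem {K : Subgroup (WreathProduct G d)} {T : Set G}
    (hT : ∀ j, ∀ t ∈ T, inl (Pi.mulSingle j t) ∈ K) {f : Fin d → G}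
    (hf : ∀ i, f i ∈ Subgroup.closure T) : inl f ∈ K := by
  have hle : ∀ j, Subgroup.closure T ≤ K.comap (inl.comp (MonoidHom.mulSingle _ j)) :=
    fun j => Subgroup.closure_le _ |>.2 (hT j)
  exact Subgroup.pi_mem_of_mulSingle_mem (H := K.comap inl) f fun j => hle j (hf j)

lemma singleton_inl_mul_wreathB (a : Fin d → G) :
    {inl a} * (wreathB H d : Set (WreathProduct G d)) = inl '' ({a} * univ.pi fun _ => H) := by
  rw [image_mul, image_singleton, coe_wreathB]

lemma wreathB_mul_singleton_inl (a : Fin d → G) :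
    (wreathB H d : Set (WreathProduct G d)) * {inl a} = inl '' ((univ.pi fun _ => H) * {a}) := by
  rw [image_mul, image_singleton, coe_wreathB]

lemma wreathB_doubleCoset_inl (a : Fin d → G) :
    (wreathB H d : Set (WreathProduct G d)) * {inl a} * (wreathB H d : Set _) =
      inl '' ((univ.pi fun _ => (H : Set G)) * {a} * univ.pi fun _ => (H : Set G)) := by
  rw [image_mul, wreathB_mul_singleton_inl, coe_wreathB]

lemma mul_inr_mem_doubleCoset {y z : WreathProduct G d} (σ : Equiv.Perm (Fin d))
    (h : z ∈ (wreathB H d : Set (WreathProduct G d)) * {y} * (wreathB H d : Set _)) :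
    z * inr σ ∈
      (wreathB H d : Set (WreathProduct G d)) * {y * inr σ} * (wreathB H d : Set _) := by
  obtain ⟨β, hβ, γ, hγ, rfl⟩ := DoubleCoset.mem_doubleCoset.1 h
  refine DoubleCoset.mem_doubleCoset.2
    ⟨β, hβ, inr σ⁻¹ * γ * (inr σ⁻¹)⁻¹, inr_conj_mem_wreathB σ⁻¹ hγ, ?_⟩
  simp only [map_inv, inv_inv]
  group

lemma singleton_inl_mulSingle_mul_wreathB_ne {s : G} (hs : {s} * (H : Set G) ≠ H * {s})
    (j : Fin d) :
    {inl (Pi.mulSingle j s)} * (wreathB H d : Set (WreathProduct G d)) ≠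
      wreathB H d * {inl (Pi.mulSingle j s)} := by
  intro h
  rw [singleton_inl_mul_wreathB, wreathB_mul_singleton_inl,
    inl_injective.image_injective.eq_iff] at h
  have hne : (univ.pi fun _ : Fin d => (H : Set G)).Nonempty := ⟨1, fun i _ => H.one_mem⟩
  have := congrArg (Set.image (Pi.evalMonoidHom (fun _ => G) j)) h
  rw [image_mul, image_mul, image_singleton, Pi.evalMonoidHom_apply, Pi.mulSingle_eq_same]
    at this
  exact hs (by simpa [eval_image_univ_pi hne] using this)

lemma singleton_inl_mulSingle_mul_wreathB_mul_subset {B N : Subgroup G} {s : G}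
    (hs : ∀ w ∈ N, {s} * (B : Set G) * {w} ⊆ ↑B * {s * w} * ↑B ∪ ↑B * {w} * ↑B)
    (j : Fin d) {w : WreathProduct G d} (hw : w ∈ wreathN N d) :
    {inl (Pi.mulSingle j s)} * (wreathB B d : Set (WreathProduct G d)) * {w} ⊆
      ↑(wreathB B d) * {inl (Pi.mulSingle j s) * w} * ↑(wreathB B d) ∪
        ↑(wreathB B d) * {w} * ↑(wreathB B d) := by
  intro g hg
  obtain ⟨_, ⟨b, hb, rfl⟩, rfl⟩ := mem_singleton_mul_mul_singleton.1 hg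
  have hb' : ∀ i, b i ∈ B := fun i => hb i (mem_univ i)
  have key : ∀ t, s * b j * w.left j ∈ (B : Set G) * {t * w.left j} * B →
      inl (Pi.mulSingle j s) * inl b * w ∈
        (wreathB B d : Set (WreathProduct G d)) * {inl (Pi.mulSingle j t) * w} *
          (wreathB B d : Set _) := by
    intro t ht
    have hmem : inl (Pi.mulSingle j s * b * w.left) ∈ (wreathB B d : Set (WreathProduct G d)) *
        {inl (Pi.mulSingle j t * w.left)} * (wreathB B d : Set _) := by
      rw [wreathB_doubleCoset_inl]
      exact mem_image_of_mem inl (Pi.mulSingle_mul_mem_univ_pi_doubleCoset hb' ht)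
    simpa only [map_mul, mul_assoc, inl_left_mul_inr_right]
      using mul_inr_mem_doubleCoset w.right hmem
  rcases hs (w.left j) (mem_wreathN.1 hw j)
    (mem_singleton_mul_mul_singleton.2 ⟨b j, hb' j, rfl⟩) with h | h
  · exact Or.inl (key s h)
  · exact Or.inr (by simpa using key 1 (by simpa using h))

lemma closure_wreathB_union_wreathN_eq_top {B N : Subgroup G}
    (hgen : Subgroup.closure ((B : Set G) ∪ N) = ⊤) :
    Subgroup.closure ((wreathB B d : Set (WreathProduct G d)) ∪ wreathN N d) = ⊤ := by
  refine eq_top_iff.2 fun x _ => ?_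
  set K := Subgroup.closure ((wreathB B d : Set (WreathProduct G d)) ∪ wreathN N d)
  have hN : wreathN N d ≤ K := fun y hy => Subgroup.subset_closure (Or.inr hy)
  rw [← inl_left_mul_inr_right x]
  refine mul_mem (inl_mem_of_forall_mulSingle_mem (T := B ∪ N) ?_ fun i => hgen ▸ trivial)
    (hN (mem_wreathN.2 fun _ => N.one_mem))
  rintro j t (ht | ht)
  · exact Subgroup.subset_closure (Or.inl (inl_mulSingle_mem_wreathB j ht))
  · refine hN (mem_wreathN.2 fun i => ?_)
    exact (Subgroup.mulSingle_mem_pi (I := univ) (H := fun _ => N) j t).2 (fun _ => ht) i trivial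

lemma inl_mem_closure_wreathS {B N : Subgroup G} {S : Set G}
    (hSgen : (N : Set G) ⊆ Subgroup.closure (S ∪ (B ⊓ N : Subgroup G))) {f : Fin d → G}
    (hf : ∀ i, f i ∈ N) :
    inl f ∈ Subgroup.closure (wreathS d S ∪ (wreathB B d ⊓ wreathN N d : Subgroup _)) := by
  refine inl_mem_of_forall_mulSingle_mem ?_ fun i => hSgen (hf i)
  rintro j t (ht | ht)
  · exact Subgroup.subset_closure (Or.inl (mem_wreathS.2 ⟨j, t, ht, rfl⟩))
  · exact Subgroup.subset_closure
      (Or.inr (wreathB_inf_wreathN B N ▸ inl_mulSingle_mem_wreathB j ht))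

end WreathProduct

open WreathProduct in
theorem wreath_generalized_tits_system_general {G : Type*} [Group G] (B N : Subgroup G) (S : Set G)
    (d : ℕ)
    -- `(G, B, N, W)` is a Tits system:
    (hgen : Subgroup.closure ((B : Set G) ∪ (N : Set G)) = ⊤)
    (hHnorm : ∀ n ∈ N, ∀ h ∈ B ⊓ N, n * h * n⁻¹ ∈ B ⊓ N)
    (hinv : ∀ s ∈ S, s * s ∈ B ⊓ N)
    (hSgen : (N : Set G) ⊆ ↑(Subgroup.closure (S ∪ ↑(B ⊓ N))))
    (hTits : ∀ s ∈ S, ∀ w ∈ N,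
      {s} * (B : Set G) * {w} ⊆ ↑B * {s * w} * ↑B ∪ ↑B * {w} * ↑B)
    (hsB : ∀ s ∈ S, {s} * (B : Set G) ≠ ↑B * {s}) :
    -- conclusion: the wreath quadruple is a generalized Tits system
    (Subgroup.closure ((wreathB B d : Set (WreathProduct G d)) ∪ ↑(wreathN N d)) = ⊤) ∧
    (∀ n ∈ wreathN N d, ∀ h ∈ wreathB B d ⊓ wreathN N d,
      n * h * n⁻¹ ∈ wreathB B d ⊓ wreathN N d) ∧
    -- `W^d` is generated by the involutive simple reflections `s^{(j)}`:
    (∀ x ∈ wreathS d S, x * x ∈ wreathB B d ⊓ wreathN N d) ∧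
    (SemidirectProduct.inl '' {f : Fin d → G | ∀ i, f i ∈ N} ⊆
      ((Subgroup.closure (wreathS d S ∪ ↑(wreathB B d ⊓ wreathN N d)) :
        Subgroup (WreathProduct G d)) : Set (WreathProduct G d))) ∧
    -- every `τ ∈ Ω = Σ_d` normalizes `B^d` and permutes the simple reflections:
    (∀ τ : Equiv.Perm (Fin d), ∀ b ∈ wreathB B d,
      (SemidirectProduct.inr τ : WreathProduct G d) * b * (SemidirectProduct.inr τ)⁻¹ ∈
        wreathB B d) ∧
    (∀ τ : Equiv.Perm (Fin d), ∀ x ∈ wreathS d S,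
      (SemidirectProduct.inr τ : WreathProduct G d) * x * (SemidirectProduct.inr τ)⁻¹ ∈
        wreathS d S) ∧
    -- `B^d τ ≠ B^d` for `τ ≠ 1`:
    (∀ τ : Equiv.Perm (Fin d), τ ≠ 1 →
      (wreathB B d : Set (WreathProduct G d)) * {SemidirectProduct.inr τ} ≠
        (wreathB B d : Set (WreathProduct G d))) ∧
    -- the Tits condition for the simple reflections of `W^d`:
    (∀ x ∈ wreathS d S, ∀ w ∈ wreathN N d,
      {x} * (wreathB B d : Set (WreathProduct G d)) * {w} ⊆
        ↑(wreathB B d) * {x * w} * ↑(wreathB B d) ∪ ↑(wreathB B d) * {w} * ↑(wreathB B d)) ∧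
    (∀ x ∈ wreathS d S,
      {x} * (wreathB B d : Set (WreathProduct G d)) ≠ ↑(wreathB B d) * {x}) := by
  refine ⟨closure_wreathB_union_wreathN_eq_top hgen, ?_, ?_, ?_,
    fun τ b hb => inr_conj_mem_wreathB τ hb, ?_,
    fun τ hτ => Subgroup.coe_mul_singleton_ne_self fun h => hτ (mem_wreathB.1 h).1, ?_, ?_⟩
  · intro n hn h hh
    rw [wreathB_inf_wreathN] at hh ⊢
    exact conj_mem_wreathB (fun i => hHnorm _ (mem_wreathN.1 hn i)) hh
  · intro x hx
    obtain ⟨j, s, hs, rfl⟩ := mem_wreathS.1 hx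
    rw [← map_mul, ← Pi.mulSingle_mul, wreathB_inf_wreathN]
    exact inl_mulSingle_mem_wreathB j (hinv s hs)
  · rintro _ ⟨f, hf, rfl⟩
    exact inl_mem_closure_wreathS hSgen hf
  · intro τ x hx
    obtain ⟨j, s, hs, rfl⟩ := mem_wreathS.1 hx
    exact mem_wreathS.2 ⟨τ j, s, hs, by rw [← map_inv, ← inl_aut, permAction_mulSingle]⟩
  · intro x hx w hw
    obtain ⟨j, s, hs, rfl⟩ := mem_wreathS.1 hx
    exact singleton_inl_mulSingle_mul_wreathB_mul_subset (hTits s hs) j hw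
  · intro x hx
    obtain ⟨j, s, hs, rfl⟩ := mem_wreathS.1 hx
    exact singleton_inl_mulSingle_mul_wreathB_ne (hsB s hs) j

/-- if `(G, B, N, W)` is a Tits system (with lifted simple reflections `S ⊆ N`),
then `(⟨B^d, N ≀ Σ_d⟩, B^d, N ≀ Σ_d, W ≀ Σ_d)` is a generalized Tits system in the sense of
Iwahori: `W ≀ Σ_d ≅ W^d ⋊ Σ_d` where `W^d` is generated by involutions, every `τ ∈ Σ_d`
normalizes `B^d` and permutes the simple reflections of `W^d`, `B^d τ ≠ B^d` for `τ ≠ 1`,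
and `s B^d w ⊆ B^d s w B^d ∪ B^d w B^d`, `s B^d ≠ B^d s` for every simple reflection `s` of
`W^d` and every `w ∈ W ≀ Σ_d`. -/
theorem wreath_generalized_tits_system {G : Type*} [Group G] (B N : Subgroup G) (S : Set G)
    (d : ℕ)
    -- `(G, B, N, W)` is a Tits system:
    (hgen : Subgroup.closure ((B : Set G) ∪ (N : Set G)) = ⊤)
    (hSN : S ⊆ (N : Set G))
    (hHnorm : ∀ n ∈ N, ∀ h ∈ B ⊓ N, n * h * n⁻¹ ∈ B ⊓ N)
    (hinv : ∀ s ∈ S, s * s ∈ B ⊓ N)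
    (hSgen : (N : Set G) ⊆ ↑(Subgroup.closure (S ∪ ↑(B ⊓ N))))
    (hTits : ∀ s ∈ S, ∀ w ∈ N,
      {s} * (B : Set G) * {w} ⊆ ↑B * {s * w} * ↑B ∪ ↑B * {w} * ↑B)
    (hsB : ∀ s ∈ S, {s} * (B : Set G) ≠ ↑B * {s}) :
    -- conclusion: the wreath quadruple is a generalized Tits system
    (Subgroup.closure ((wreathB B d : Set (WreathProduct G d)) ∪ ↑(wreathN N d)) = ⊤) ∧
    (∀ n ∈ wreathN N d, ∀ h ∈ wreathB B d ⊓ wreathN N d,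
      n * h * n⁻¹ ∈ wreathB B d ⊓ wreathN N d) ∧
    -- `W^d` is generated by the involutive simple reflections `s^{(j)}`:
    (∀ x ∈ wreathS d S, x * x ∈ wreathB B d ⊓ wreathN N d) ∧
    (SemidirectProduct.inl '' {f : Fin d → G | ∀ i, f i ∈ N} ⊆
      ((Subgroup.closure (wreathS d S ∪ ↑(wreathB B d ⊓ wreathN N d)) :
        Subgroup (WreathProduct G d)) : Set (WreathProduct G d))) ∧
    -- every `τ ∈ Ω = Σ_d` normalizes `B^d` and permutes the simple reflections:
    (∀ τ : Equiv.Perm (Fin d), ∀ b ∈ wreathB B d,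
      (SemidirectProduct.inr τ : WreathProduct G d) * b * (SemidirectProduct.inr τ)⁻¹ ∈
        wreathB B d) ∧
    (∀ τ : Equiv.Perm (Fin d), ∀ x ∈ wreathS d S,
      (SemidirectProduct.inr τ : WreathProduct G d) * x * (SemidirectProduct.inr τ)⁻¹ ∈
        wreathS d S) ∧
    -- `B^d τ ≠ B^d` for `τ ≠ 1`:
    (∀ τ : Equiv.Perm (Fin d), τ ≠ 1 →
      (wreathB B d : Set (WreathProduct G d)) * {SemidirectProduct.inr τ} ≠
        (wreathB B d : Set (WreathProduct G d))) ∧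
    -- the Tits condition for the simple reflections of `W^d`:
    (∀ x ∈ wreathS d S, ∀ w ∈ wreathN N d,
      {x} * (wreathB B d : Set (WreathProduct G d)) * {w} ⊆
        ↑(wreathB B d) * {x * w} * ↑(wreathB B d) ∪ ↑(wreathB B d) * {w} * ↑(wreathB B d)) ∧
    (∀ x ∈ wreathS d S,
      {x} * (wreathB B d : Set (WreathProduct G d)) ≠ ↑(wreathB B d) * {x}) :=
  wreath_generalized_tits_system_general B N S d hgen hHnorm hinv hSgen hTits hsB
end

section
/- Let x = (x_1,...,x_d) ∈ N_m^d with Jordan types λ_1,...,λ_d ⊢ m, and for each partition ν ⊢ m let γ(x)(ν) = #{i : λ_i = ν}. Then the component group C(x) = C_{G_{m≀d}}(x)/C_{G_{m≀d}}(x)^0 of the centralizer of x in G_{m≀d} is isomorphic to the Young subgroup Σ_{γ(x)} = ∏_{ν ⊢ m} Σ_{γ(x)(ν)} of Σ_d. -/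
/-- The abstract group `G_{m≀d} = GL_m(ℂ) ≀ Σ_d`. -/
abbrev WreathGL (m d : ℕ) := WreathProduct (GL (Fin m) ℂ) d

/-- `Σ_d` is discrete. -/
instance (d : ℕ) : TopologicalSpace (Equiv.Perm (Fin d)) := ⊥

/-- `G_{m≀d} = GL_m(ℂ)^d × Σ_d` as a topological space. -/
noncomputable instance (m d : ℕ) : TopologicalSpace (WreathGL m d) :=
  TopologicalSpace.induced (fun x => (x.left, x.right)) inferInstance

/-- The conjugation action of `G_{m≀d}` on `gl_m(ℂ)^d`
(with place permutation): `(g_i)_i w · (x_i)_i = (g_i x_{w⁻¹(i)} g_i⁻¹)_i`. -/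
noncomputable def wreathConjAct {m d : ℕ} (γ : WreathGL m d)
    (n : Fin d → Matrix (Fin m) (Fin m) ℂ) : Fin d → Matrix (Fin m) (Fin m) ℂ :=
  fun i => (γ.left i : Matrix (Fin m) (Fin m) ℂ) * n (γ.right⁻¹ i) *
    ((γ.left i)⁻¹ : GL (Fin m) ℂ)

/-- The centralizer `C_{G_{m≀d}}(x)` of `x ∈ N_m^d` (its underlying set is a subgroup, hence
equals its closure). -/
noncomputable def wreathCentralizer (m d : ℕ) (x : Fin d → Matrix (Fin m) (Fin m) ℂ) :
    Subgroup (WreathGL m d) :=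
  Subgroup.closure {γ | wreathConjAct γ x = x}

/-- The Young subgroup `Σ_γ ⊆ Σ_d` attached to a coloring `c : {1,...,d} → X`:
permutations preserving the coloring. -/
def youngSubgroup {d : ℕ} {X : Type*} (c : Fin d → X) : Subgroup (Equiv.Perm (Fin d)) where
  carrier := {σ | ∀ i, c (σ i) = c i}
  one_mem' := fun _ => rfl
  mul_mem' := by
    intro a b ha hb i
    simpa [Equiv.Perm.mul_apply] using (ha (b i)).trans (hb i)
  inv_mem' := by
    intro a ha i
    have := ha (a⁻¹ i)
    simpa using this.symm

/-! The projection `γ ↦ γ.right` maps `C(x)` onto the permutations `w` with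
`λ (w i) = λ i`, i.e. onto the Young subgroup, because `x i` and `x j` are conjugate iff
`λ i = λ j`. Its kernel is `∏ᵢ C_{GL_m}(xᵢ)`, which is connected: the units of any complex
subalgebra of matrices are path connected, since the segment `t ↦ 1 + t • (g - 1)` leaves the
invertible matrices only at the finitely many roots of a nonzero polynomial in `t ∈ ℂ`, which a
path from `0` to `1` in `ℂ` can avoid. As `Σ_d` is discrete the kernel is also clopen, hence it
is the identity component. -/

open Polynomial Matrix

section
variable {n : Type*} [Fintype n] [DecidableEq n]

theorem Matrix.eval_det_one_add_X_smul {R : Type*} [CommRing R] (M : Matrix n n R) (r : R) :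
    (det (1 + (X : R[X]) • M.map C)).eval r = det (1 + r • M) := by
  simp [eval_det, ← smul_eq_mul_diagonal]

theorem Matrix.continuous_isUnit_unit {𝕜 Y : Type*} [Field 𝕜] [TopologicalSpace 𝕜]
    [IsTopologicalDivisionRing 𝕜] [TopologicalSpace Y] {f : Y → Matrix n n 𝕜}
    (hf : Continuous f) (h : ∀ y, IsUnit (f y)) : Continuous fun y => (h y).unit := by
  refine Units.continuous_iff.mpr ⟨by simpa [Function.comp_def] using hf, ?_⟩
  simp only [coe_units_inv, IsUnit.unit_spec]
  refine continuous_iff_continuousAt.mpr fun y =>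
    (continuousAt_matrix_inv _ ?_).comp hf.continuousAt
  rw [Ring.inverse_eq_inv']
  exact continuousAt_inv₀ ((isUnit_iff_isUnit_det _).mp (h y)).ne_zero

theorem Matrix.isPathConnected_setOf_val_mem_subalgebra (S : Subalgebra ℂ (Matrix n n ℂ)) :
    IsPathConnected {g : GL n ℂ | (g : Matrix n n ℂ) ∈ S} := by
  refine ⟨1, S.one_mem, fun {g} hg => ?_⟩
  set A : Matrix n n ℂ := ↑g
  set p : ℂ[X] := det (1 + (X : ℂ[X]) • (A - 1).map C)
  have hp : ∀ t, p.eval t = det (1 + t • (A - 1)) := eval_det_one_add_X_smul _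
  have hp0 : ¬ p.IsRoot 0 := by simp [hp]
  have hp1 : ¬ p.IsRoot 1 := by
    simpa [hp] using ((isUnit_iff_isUnit_det A).mp g.isUnit).ne_zero
  have hp_ne : p ≠ 0 := by rintro h; simp [h] at hp0
  have hroots : IsPathConnected {t | p.IsRoot t}ᶜ :=
    (p.finite_setOfPred_isRoot hp_ne).countable.isPathConnected_compl_of_one_lt_rank
      (by simp [Complex.rank_real_complex])
  obtain ⟨γ, hγ⟩ := hroots.joinedIn 0 hp0 1 hp1
  have hunit : ∀ s, IsUnit (1 + γ s • (A - 1)) := fun s =>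
    (isUnit_iff_isUnit_det _).mpr (Ne.isUnit (by simpa [hp] using hγ s))
  refine ⟨⟨⟨fun s => (hunit s).unit, continuous_isUnit_unit (by fun_prop) hunit⟩, ?_, ?_⟩,
    fun s => ?_⟩
  · ext1; simp
  · ext1; simp [A]
  · exact S.add_mem S.one_mem (S.smul_mem (S.sub_mem hg S.one_mem) _)

end

theorem MonoidHom.coe_ker_eq_connectedComponent_one {G H : Type*} [Group G] [TopologicalSpace G]
    [Group H] [TopologicalSpace H] [DiscreteTopology H] (f : G →* H) (hf : Continuous f)
    (hker : IsPreconnected (f.ker : Set G)) : (f.ker : Set G) = connectedComponent 1 :=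
  (hker.subset_connectedComponent f.ker.one_mem).antisymm <| by
    rw [MonoidHom.coe_ker]
    exact ((isClopen_discrete {1}).preimage hf).connectedComponent_subset (map_one f)

instance (d : ℕ) : DiscreteTopology (Equiv.Perm (Fin d)) := ⟨rfl⟩

namespace WreathGL
variable {m d : ℕ}

noncomputable instance : MulAction (WreathGL m d) (Fin d → Matrix (Fin m) (Fin m) ℂ) where
  smul := wreathConjAct
  one_smul x := by
    change wreathConjAct 1 x = x
    funext i
    simp [wreathConjAct]
  mul_smul γ δ x := by
    change wreathConjAct (γ * δ) x = wreathConjAct γ (wreathConjAct δ x)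
    funext i
    simp [wreathConjAct, permAction, mul_assoc]

theorem smul_apply (γ : WreathGL m d) (x : Fin d → Matrix (Fin m) (Fin m) ℂ) (i : Fin d) :
    (γ • x) i = (γ.left i : Matrix (Fin m) (Fin m) ℂ) * x (γ.right⁻¹ i) *
      ((γ.left i)⁻¹ : GL (Fin m) ℂ) :=
  rfl

theorem continuous_right : Continuous fun γ : WreathGL m d => γ.right :=
  continuous_snd.comp (continuous_induced_dom (f := fun γ : WreathGL m d => (γ.left, γ.right)))

theorem continuous_inl :
    Continuous (SemidirectProduct.inl : (Fin d → GL (Fin m) ℂ) → WreathGL m d) :=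
  continuous_induced_rng.mpr (continuous_id.prodMk continuous_const)

theorem inl_mem_stabilizer_iff (x : Fin d → Matrix (Fin m) (Fin m) ℂ)
    (g : Fin d → GL (Fin m) ℂ) :
    SemidirectProduct.inl g ∈ MulAction.stabilizer (WreathGL m d) x ↔
      ∀ i, Commute (g i : Matrix (Fin m) (Fin m) ℂ) (x i) := by
  simp only [MulAction.mem_stabilizer_iff, funext_iff, smul_apply, SemidirectProduct.left_inl,
    SemidirectProduct.right_inl, inv_one, Equiv.Perm.one_apply, Units.mul_inv_eq_iff_eq_mul]
  exact Iff.rfl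

theorem stabilizer_inf_ker_rightHom (x : Fin d → Matrix (Fin m) (Fin m) ℂ) :
    ((MulAction.stabilizer (WreathGL m d) x ⊓ SemidirectProduct.rightHom.ker : Subgroup _) :
      Set (WreathGL m d)) =
      SemidirectProduct.inl ''
        Set.univ.pi fun i => {g : GL (Fin m) ℂ | Commute (g : Matrix _ _ ℂ) (x i)} := by
  ext γ
  constructor
  · rintro ⟨hstab, hright⟩
    have hγ : SemidirectProduct.inl γ.left = γ := SemidirectProduct.ext rfl hright.symm
    rw [← hγ] at hstab
    exact ⟨γ.left, fun i _ => (inl_mem_stabilizer_iff x _).mp hstab i, hγ⟩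
  · rintro ⟨g, hg, rfl⟩
    exact ⟨(inl_mem_stabilizer_iff x g).mpr fun i => hg i trivial, rfl⟩

theorem isPreconnected_stabilizer_inf_ker_rightHom (x : Fin d → Matrix (Fin m) (Fin m) ℂ) :
    IsPreconnected ((MulAction.stabilizer (WreathGL m d) x ⊓ SemidirectProduct.rightHom.ker :
      Subgroup _) : Set (WreathGL m d)) := by
  rw [stabilizer_inf_ker_rightHom]
  refine (isPreconnected_univ_pi fun i => ?_).image _ continuous_inl.continuousOn
  have hcentralizer : {g : GL (Fin m) ℂ | Commute (g : Matrix _ _ ℂ) (x i)} =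
      {g : GL (Fin m) ℂ | (g : Matrix _ _ ℂ) ∈ Subalgebra.centralizer ℂ {x i}} := by
    ext g
    simp [Subalgebra.mem_centralizer_iff, commute_iff_eq, eq_comm]
  rw [hcentralizer]
  exact (isPathConnected_setOf_val_mem_subalgebra _).isConnected.isPreconnected

theorem map_rightHom_stabilizer {X : Type*} (x : Fin d → Matrix (Fin m) (Fin m) ℂ)
    (c : Fin d → X) (hc : ∀ i j, c i = c j ↔ ∃ g : GL (Fin m) ℂ,
      (g : Matrix (Fin m) (Fin m) ℂ) * x j * ((g⁻¹ : GL (Fin m) ℂ) : Matrix _ _ ℂ) = x i) :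
    (MulAction.stabilizer (WreathGL m d) x).map SemidirectProduct.rightHom = youngSubgroup c := by
  ext w
  simp only [Subgroup.mem_map, MulAction.mem_stabilizer_iff, funext_iff, smul_apply]
  constructor
  · rintro ⟨γ, hγ, rfl⟩ i
    exact (hc _ i).mpr ⟨γ.left (γ.right i), by simpa using hγ (γ.right i)⟩
  · intro hw
    choose g hg using fun i => (hc i (w⁻¹ i)).mp (by simpa using hw (w⁻¹ i))
    exact ⟨⟨g, w⟩, hg, rfl⟩

end WreathGL

theorem wreathCentralizer_eq_stabilizer {m d : ℕ} (x : Fin d → Matrix (Fin m) (Fin m) ℂ) :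
    wreathCentralizer m d x = MulAction.stabilizer (WreathGL m d) x :=
  Subgroup.closure_eq (MulAction.stabilizer (WreathGL m d) x)

theorem component_group_iso_young_general (m d : ℕ)
    (x : Fin d → Matrix (Fin m) (Fin m) ℂ)
    (lam : Fin d → Nat.Partition m)
    (hlam : ∀ i j : Fin d, lam i = lam j ↔
      ∃ g : GL (Fin m) ℂ,
        (g : Matrix (Fin m) (Fin m) ℂ) * x j * ((g⁻¹ : GL (Fin m) ℂ) :
          Matrix (Fin m) (Fin m) ℂ) = x i) :
    ∃ H : Subgroup ↥(wreathCentralizer m d x),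
      (H : Set ↥(wreathCentralizer m d x)) =
        connectedComponent (1 : ↥(wreathCentralizer m d x)) ∧
      ∃ hn : H.Normal,
        Nonempty
          (letI := hn
           (↥(wreathCentralizer m d x) ⧸ H) ≃* ↥(youngSubgroup lam)) := by
  rw [wreathCentralizer_eq_stabilizer]
  set C := MulAction.stabilizer (WreathGL m d) x
  let ψ : C →* Equiv.Perm (Fin d) := SemidirectProduct.rightHom.comp C.subtype
  have hψ : Continuous ψ := WreathGL.continuous_right.comp continuous_subtype_val
  have hker : IsPreconnected (ψ.ker : Set C) := by
    rw [← Topology.IsInducing.subtypeVal.isPreconnected_image]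
    convert WreathGL.isPreconnected_stabilizer_inf_ker_rightHom x using 1
    ext γ
    simp [ψ, C, and_comm]
  have hrange : ψ.range = youngSubgroup lam := by
    rw [MonoidHom.range_comp, Subgroup.range_subtype, WreathGL.map_rightHom_stabilizer x lam hlam]
  exact ⟨ψ.ker, ψ.coe_ker_eq_connectedComponent_one hψ hker, inferInstance,
    ⟨(QuotientGroup.quotientKerEquivRange ψ).trans (MulEquiv.subgroupCongr hrange)⟩⟩

/-- for `x = (x_1,...,x_d) ∈ N_m^d` with Jordan types `λ_1,...,λ_d ⊢ m`
(encoded by a labelling `lam` such that `lam i = lam j` iff `x_i` and `x_j` are conjugate),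
the component group `C(x) = C_{G_{m≀d}}(x) / C_{G_{m≀d}}(x)⁰` is isomorphic to the Young
subgroup `Σ_{γ(x)} = ∏_{ν ⊢ m} Σ_{γ(x)(ν)}` of `Σ_d`. -/
theorem component_group_iso_young (m d : ℕ)
    (x : Fin d → Matrix (Fin m) (Fin m) ℂ) (hx : ∀ i, IsNilpotent (x i))
    (lam : Fin d → Nat.Partition m)
    (hlam : ∀ i j : Fin d, lam i = lam j ↔
      ∃ g : GL (Fin m) ℂ,
        (g : Matrix (Fin m) (Fin m) ℂ) * x j * ((g⁻¹ : GL (Fin m) ℂ) :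
          Matrix (Fin m) (Fin m) ℂ) = x i) :
    ∃ H : Subgroup ↥(wreathCentralizer m d x),
      (H : Set ↥(wreathCentralizer m d x)) =
        connectedComponent (1 : ↥(wreathCentralizer m d x)) ∧
      ∃ hn : H.Normal,
        Nonempty
          (letI := hn
           (↥(wreathCentralizer m d x) ⧸ H) ≃* ↥(youngSubgroup lam)) :=
  component_group_iso_young_general m d x lam hlam
end
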